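/- Recursion (K2): for every σ ∈ {0,1,…,r}^N and every integer k with 1 ≤ k ≤ r-1, 𝐠(σ·k) = 𝐠((k-1)·σ), where σ·k denotes σ with the entry k appended and (k-1)·σ denotes σ with the entry k-1 prepended. -/

import Mathlib

open MvPolynomial

noncomputable section

/-- The field `F = ℚ(q,a,t)` of rational functions in three variables over `ℚ`. -/
abbrev KRF : Type := FractionRing (MvPolynomial (Fin 3) ℚ)

/-- The variable `q` in `F`. -/
def fq : KRF := algebraMap (MvPolynomial (Fin 3) ℚ) KRF (X 0)
/-- The variable `a` in `F`. -/
def fa : KRF := algebraMap (MvPolynomial (Fin 3) ℚ) KRF (X 1)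
/-- The variable `t` in `F`. -/
def ft : KRF := algebraMap (MvPolynomial (Fin 3) ℚ) KRF (X 2)

/-- The number `|v|` of ones in a binary sequence. -/
def onesCt (v : List Bool) : ℕ := v.count true

/-- A p-family: a function on (balanced) pairs of binary sequences with values in
`F = ℚ(q,a,t)` satisfying the five recursion rules (1)-(5). -/
def IsPFamily (p : List Bool → List Bool → KRF) : Prop :=
  (∀ n : ℕ, p [] (List.replicate n false) = ((1 + fa) / (1 - fq)) ^ n) ∧
  (∀ m : ℕ, p (List.replicate m false) [] = ((1 + fa) / (1 - fq)) ^ m) ∧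
  (∀ v w : List Bool, onesCt v = onesCt w →
      p (v ++ [true]) (w ++ [true]) = (ft ^ onesCt v + fa) * p v w) ∧
  (∀ v w : List Bool, onesCt v = onesCt w + 1 →
      p (v ++ [false]) (w ++ [true]) = p v (true :: w)) ∧
  (∀ v w : List Bool, onesCt v + 1 = onesCt w →
      p (v ++ [true]) (w ++ [false]) = p (true :: v) w) ∧
  (∀ v w : List Bool, onesCt v = onesCt w →
      p (v ++ [false]) (w ++ [false]) =
        ft ^ (-(onesCt v : ℤ)) * p (true :: v) (true :: w) +
          fq * ft ^ (-(onesCt v : ℤ)) * p (false :: v) (false :: w))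

/-- The symbols `1`, `0`, `∗` used in fillings. -/
inductive Symb : Type
  | one : Symb
  | zero : Symb
  | star : Symb
deriving DecidableEq

/-- An admissible filling of the `r × N` grid (rows indexed top-to-bottom by `Fin r`,
columns left-to-right by `Fin N`): every row and every column contains at most one `1`,
every cell strictly below a `1` in the same column is `∗`, and every other cell is `0`
(i.e. every `∗` lies strictly below a `1` in its column). -/
def IsAdmissible {r N : ℕ} (T : Fin r → Fin N → Symb) : Prop :=
  (∀ (i : Fin r) (j j' : Fin N), T i j = Symb.one → T i j' = Symb.one → j = j') ∧
  (∀ (j : Fin N) (i i' : Fin r), T i j = Symb.one → T i' j = Symb.one → i = i') ∧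
  (∀ (i i' : Fin r) (j : Fin N), T i j = Symb.one → i < i' → T i' j = Symb.star) ∧
  (∀ (i : Fin r) (j : Fin N), T i j = Symb.star → ∃ i' : Fin r, i' < i ∧ T i' j = Symb.one)

/-- `σ(T)_j`: the number of cells labeled `0` in the `j`-th column of `T`. -/
def colZeros {r N : ℕ} (T : Fin r → Fin N → Symb) (j : Fin N) : ℕ :=
  (Finset.univ.filter (fun i => T i j = Symb.zero)).card

/-- `v(T)_j = 1` iff the `j`-th column of `T` is occupied (contains a `1`). -/
def vFun {r N : ℕ} (T : Fin r → Fin N → Symb) (j : Fin N) : Bool :=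
  decide (∃ i : Fin r, T i j = Symb.one)

/-- The binary sequence `v(T)` as a list. -/
def vList {r N : ℕ} (T : Fin r → Fin N → Symb) : List Bool :=
  (List.finRange N).map (vFun T)

/-- The binary sequence `w(T)`: read the entries of `T` from left to right along each row,
taking the rows from bottom to top, skipping all cells labeled `∗` (with `1 ↦ true`,
`0 ↦ false`). -/
def wList {r N : ℕ} (T : Fin r → Fin N → Symb) : List Bool :=
  ((List.finRange r).reverse.map (fun i =>
    (List.finRange N).filterMap (fun j =>
      match T i j with
      | Symb.one => some true
      | Symb.zero => some false
      | Symb.star => none))).flatten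

/-! ### Auxiliary development -/

/-- The canonical column pattern: `0` above the one at height `c`, `∗` below. -/
def canonSym (c i : ℕ) : Symb :=
  if i < c then Symb.zero else if i = c then Symb.one else Symb.star

lemma finRange_succ_last (n : ℕ) :
    List.finRange (n + 1) = (List.finRange n).map Fin.castSucc ++ [Fin.last n] := by
  apply List.ext_getElem
  · simp
  intro i h1 h2
  simp only [List.getElem_finRange]
  rcases Nat.lt_or_ge i n with h | h
  · rw [List.getElem_append_left (by simpa)]
    simp [Fin.ext_iff]
  · have : i = n := by simp at h1; omega
    subst this
    rw [List.getElem_append_right (by simp)]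
    simp [Fin.ext_iff, Fin.last]

/-- Every admissible filling is canonical: determined by its column zero-counts. -/
lemma canon {r M : ℕ} {T : Fin r → Fin M → Symb} (hT : IsAdmissible T)
    {τ : Fin M → ℕ} (hτ : ∀ j, colZeros T j = τ j) (i : Fin r) (j : Fin M) :
    T i j = canonSym (τ j) i.val := by
  obtain ⟨_h1, h2, h3, h4⟩ := hT
  by_cases hocc : ∃ i0, T i0 j = Symb.one
  · obtain ⟨m, hm⟩ := hocc
    have hcell : ∀ i : Fin r, T i j = canonSym m.val i.val := by
      intro i
      unfold canonSym
      rcases lt_trichotomy i m with h | h | h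
      · rw [if_pos (Fin.lt_def.mp h)]
        cases hTij : T i j with
        | one => exact absurd (h2 j i m hTij hm) (ne_of_lt h)
        | zero => rfl
        | star =>
          obtain ⟨i', hi1, hi2⟩ := h4 i j hTij
          have := h2 j i' m hi2 hm
          subst this
          exact absurd (hi1.trans h) (lt_irrefl _)
      · subst h
        rw [if_neg (lt_irrefl _), if_pos rfl]
        exact hm
      · have h' := Fin.lt_def.mp h
        rw [if_neg (by omega), if_neg (by omega)]
        exact h3 m i j hm h
    have hcol : τ j = m.val := by
      rw [← hτ j]
      unfold colZeros
      have heq : (Finset.univ.filter fun i => T i j = Symb.zero) = Finset.Iio m := by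
        ext i
        simp only [Finset.mem_filter, Finset.mem_univ, true_and, Finset.mem_Iio, Fin.lt_def]
        rw [hcell i]
        unfold canonSym
        split_ifs with h' h'' <;> simp_all
      rw [heq, Fin.card_Iio]
    rw [hcol]
    exact hcell i
  · push_neg at hocc
    have hc : ∀ i, T i j = Symb.zero := by
      intro i
      cases hTij : T i j with
      | one => exact absurd hTij (hocc i)
      | zero => rfl
      | star =>
        obtain ⟨i', _, h1⟩ := h4 i j hTij
        exact absurd h1 (hocc i')
    have hcol : τ j = r := by
      rw [← hτ j]
      unfold colZeros
      rw [Finset.filter_true_of_mem (fun i _ => hc i)]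
      simp
    rw [hcol]
    unfold canonSym
    rw [if_pos i.isLt]
    exact hc i

/-- The word read from row `i` (for a canonical filling with column counts `τ`). -/
def rowWord {M : ℕ} (τ : Fin M → ℕ) (i : ℕ) : List Bool :=
  (List.finRange M).filterMap
    (fun j => if i < τ j then some false else if i = τ j then some true else none)

/-- Contribution of a single extra column with count `c` to row `i`. -/
def eCol (c i : ℕ) : List Bool :=
  if i < c then [false] else if i = c then [true] else []

lemma vList_canon {r M : ℕ} {T : Fin r → Fin M → Symb} (hT : IsAdmissible T)
    {τ : Fin M → ℕ} (hτ : ∀ j, colZeros T j = τ j) :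
    vList T = (List.finRange M).map (fun j => decide (τ j < r)) := by
  unfold vList
  apply List.map_congr_left
  intro j _
  unfold vFun
  rw [decide_eq_decide]
  constructor
  · rintro ⟨i, hi⟩
    rw [canon ⟨hT.1, hT.2.1, hT.2.2.1, hT.2.2.2⟩ hτ i j] at hi
    unfold canonSym at hi
    split_ifs at hi with h' h''
    · omega
  · intro h
    refine ⟨⟨τ j, h⟩, ?_⟩
    rw [canon ⟨hT.1, hT.2.1, hT.2.2.1, hT.2.2.2⟩ hτ]
    unfold canonSym
    simp

lemma wList_canon {r M : ℕ} {T : Fin r → Fin M → Symb} (hT : IsAdmissible T)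
    {τ : Fin M → ℕ} (hτ : ∀ j, colZeros T j = τ j) :
    wList T = ((List.range r).reverse.map (rowWord τ)).flatten := by
  unfold wList
  congr 1
  have hrow : ∀ i : Fin r,
      (List.finRange M).filterMap (fun j =>
        match T i j with
        | Symb.one => some true
        | Symb.zero => some false
        | Symb.star => none) = rowWord τ i.val := by
    intro i
    unfold rowWord
    apply List.filterMap_congr
    intro j _
    rw [canon hT hτ i j]
    unfold canonSym
    split_ifs <;> rfl
  calc (List.finRange r).reverse.map (fun i =>
        (List.finRange M).filterMap (fun j =>
          match T i j with
          | Symb.one => some true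
          | Symb.zero => some false
          | Symb.star => none))
      = (List.finRange r).reverse.map (fun i => rowWord τ i.val) := by
        apply List.map_congr_left; intro i _; exact hrow i
    _ = ((List.finRange r).map (fun i => rowWord τ i.val)).reverse := by
        rw [List.map_reverse]
    _ = (((List.finRange r).map Fin.val).map (rowWord τ)).reverse := by
        rw [List.map_map]; rfl
    _ = ((List.range r).map (rowWord τ)).reverse := by
        congr 2; apply List.ext_getElem <;> simp
    _ = (List.range r).reverse.map (rowWord τ) := by
        rw [List.map_reverse]

lemma rowWord_snoc {N : ℕ} (σ : Fin N → ℕ) (c i : ℕ) :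
    rowWord (Fin.snoc σ c : Fin (N + 1) → ℕ) i = rowWord σ i ++ eCol c i := by
  unfold rowWord eCol
  rw [finRange_succ_last, List.filterMap_append, List.filterMap_map]
  congr 1
  · apply List.filterMap_congr
    intro j _
    simp [Fin.snoc_castSucc]
  · simp only [List.filterMap_cons, List.filterMap_nil, Fin.snoc_last]
    split_ifs <;> rfl

lemma rowWord_cons {N : ℕ} (σ : Fin N → ℕ) (c i : ℕ) :
    rowWord (Fin.cons c σ : Fin (N + 1) → ℕ) i = eCol c i ++ rowWord σ i := by
  unfold rowWord eCol
  rw [List.finRange_succ, List.filterMap_cons, List.filterMap_map]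
  have h2 : (List.finRange N).filterMap
      ((fun j => if i < (Fin.cons c σ : Fin (N + 1) → ℕ) j then some false
        else if i = (Fin.cons c σ : Fin (N + 1) → ℕ) j then some true else none) ∘ Fin.succ)
      = (List.finRange N).filterMap
        (fun j => if i < σ j then some false else if i = σ j then some true else none) := by
    apply List.filterMap_congr
    intro j _
    simp [Fin.cons_succ]
  rw [h2]
  simp only [Fin.cons_zero]
  split_ifs <;> rfl

/-- Bottom-up concatenation of the first `m` rows. -/
def G (f : ℕ → List Bool) (m : ℕ) : List Bool := ((List.range m).reverse.map f).flatten

lemma G_succ (f : ℕ → List Bool) (m : ℕ) : G f (m + 1) = f m ++ G f m := by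
  unfold G
  rw [List.range_succ, List.reverse_append]
  simp

lemma main_id (A : ℕ → List Bool) (k' : ℕ) :
    ∀ m, k' + 2 ≤ m →
      G (fun i => A i ++ eCol (k' + 1) i) m = G (fun i => eCol k' i ++ A i) m ++ [false] := by
  have hlow : ∀ m, m ≤ k' →
      [false] ++ G (fun i => A i ++ eCol (k' + 1) i) m
        = G (fun i => eCol k' i ++ A i) m ++ [false] := by
    intro m
    induction m with
    | zero => intro _; simp [G]
    | succ m ih =>
      intro hm
      have h1 : eCol (k' + 1) m = [false] := by unfold eCol; rw [if_pos (by omega)]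
      have h2 : eCol k' m = [false] := by unfold eCol; rw [if_pos (by omega)]
      rw [G_succ, G_succ, h1, h2]
      have ih' := ih (by omega)
      simp only [List.append_assoc] at ih' ⊢
      rw [← ih']
  intro m hm
  induction m, hm using Nat.le_induction with
  | base =>
    rw [G_succ, G_succ, G_succ, G_succ]
    have e1 : eCol (k' + 1) (k' + 1) = [true] := by
      unfold eCol; rw [if_neg (by omega), if_pos rfl]
    have e2 : eCol k' (k' + 1) = [] := by
      unfold eCol; rw [if_neg (by omega), if_neg (by omega)]
    have e3 : eCol (k' + 1) k' = [false] := by unfold eCol; rw [if_pos (by omega)]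
    have e4 : eCol k' k' = [true] := by unfold eCol; rw [if_neg (by omega), if_pos rfl]
    rw [e1, e2, e3, e4]
    have hl := hlow k' le_rfl
    simp only [List.append_assoc, List.nil_append] at hl ⊢
    rw [← hl]
  | succ m hm ih =>
    rw [G_succ, G_succ]
    have e1 : eCol (k' + 1) m = [] := by
      unfold eCol; rw [if_neg (by omega), if_neg (by omega)]
    have e2 : eCol k' m = [] := by
      unfold eCol; rw [if_neg (by omega), if_neg (by omega)]
    rw [e1, e2, ih]
    simp

lemma sum_map_range (f : ℕ → ℕ) (n : ℕ) :
    ((List.range n).map f).sum = ∑ i ∈ Finset.range n, f i := by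
  induction n with
  | zero => simp
  | succ n ih =>
    rw [List.range_succ, Finset.sum_range_succ, List.map_append, List.sum_append, ih]
    simp

lemma count_aux {M : ℕ} (r : ℕ) (τ : Fin M → ℕ) (l : List (Fin M)) :
    ((List.range r).map (fun i =>
      (l.filterMap (fun j =>
        if i < τ j then some false else if i = τ j then some true else none)).count true)).sum
      = (l.map (fun j => decide (τ j < r))).count true := by
  induction l with
  | nil =>
    simp only [List.filterMap_nil, List.count_nil, List.map_nil]
    rw [sum_map_range]
    simp
  | cons a l ih =>
    have hstep : ∀ i : ℕ,
        ((a :: l).filterMap (fun j =>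
          if i < τ j then some false else if i = τ j then some true else none)).count true
        = (l.filterMap (fun j =>
          if i < τ j then some false else if i = τ j then some true else none)).count true
          + (if i = τ a then 1 else 0) := by
      intro i
      rw [List.filterMap_cons]
      split_ifs with h1 h2 <;>
        first
          | omega
          | simp [List.count_cons]
    calc ((List.range r).map (fun i =>
          ((a :: l).filterMap (fun j =>
            if i < τ j then some false else if i = τ j then some true else none)).count true)).sum
        = ∑ i ∈ Finset.range r,
            ((l.filterMap (fun j =>
              if i < τ j then some false else if i = τ j then some true else none)).count true
              + (if i = τ a then 1 else 0)) := by
          rw [sum_map_range]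
          exact Finset.sum_congr rfl (fun i _ => hstep i)
      _ = (l.map (fun j => decide (τ j < r))).count true + (if τ a < r then 1 else 0) := by
          rw [Finset.sum_add_distrib, ← sum_map_range, ih, Finset.sum_ite_eq' (Finset.range r)]
          simp [Finset.mem_range]
      _ = ((a :: l).map (fun j => decide (τ j < r))).count true := by
          rw [List.map_cons, List.count_cons]
          by_cases h : τ a < r <;> simp [h]

lemma count_G {M : ℕ} (r : ℕ) (τ : Fin M → ℕ) :
    (G (rowWord τ) r).count true
      = ((List.finRange M).map (fun j => decide (τ j < r))).count true := by
  unfold G rowWord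
  rw [List.count_flatten, List.map_map, List.map_reverse, List.sum_reverse]
  simpa [Function.comp_def] using count_aux r τ (List.finRange M)

/-- Recursion (K2): `𝐠(σ·k) = 𝐠((k-1)·σ)` for `1 ≤ k ≤ r-1`.
Here `𝐠(σ) = p(v(σ), w(σ)·0)`, with `T1` (resp. `T2`) the unique admissible filling whose
column-zero-counts are `σ·k` (i.e. `Fin.snoc σ k`) (resp. `(k-1)·σ`, i.e.
`Fin.cons (k-1) σ`). -/
theorem g_recursion_K2 (p : List Bool → List Bool → KRF) (hp : IsPFamily p)
    (r : ℕ) (hr : 1 ≤ r) (N : ℕ) (σ : Fin N → ℕ) (hσ : ∀ i, σ i ≤ r)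
    (k : ℕ) (hk1 : 1 ≤ k) (hk2 : k ≤ r - 1)
    (T1 : Fin r → Fin (N + 1) → Symb) (hT1 : IsAdmissible T1)
    (hT1σ : ∀ j, colZeros T1 j = (Fin.snoc σ k : Fin (N + 1) → ℕ) j)
    (T2 : Fin r → Fin (N + 1) → Symb) (hT2 : IsAdmissible T2)
    (hT2σ : ∀ j, colZeros T2 j = (Fin.cons (k - 1) σ : Fin (N + 1) → ℕ) j) :
    p (vList T1) (wList T1 ++ [false]) = p (vList T2) (wList T2 ++ [false]) := by
  have hkr : k < r := by omega
  have hk1r : k - 1 < r := by omega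
  set V : List Bool := (List.finRange N).map (fun j => decide (σ j < r)) with hV
  -- v-lists
  have hv1 : vList T1 = V ++ [true] := by
    rw [vList_canon hT1 hT1σ, finRange_succ_last, List.map_append, List.map_map]
    have hhead : (List.finRange N).map
        ((fun j => decide ((Fin.snoc σ k : Fin (N + 1) → ℕ) j < r)) ∘ Fin.castSucc) = V := by
      apply List.map_congr_left
      intro j _
      simp [Fin.snoc_castSucc]
    rw [hhead]
    simp [Fin.snoc_last, hkr]
  have hv2 : vList T2 = true :: V := by
    rw [vList_canon hT2 hT2σ, List.finRange_succ, List.map_cons, List.map_map]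
    have htail : (List.finRange N).map
        ((fun j => decide ((Fin.cons (k - 1) σ : Fin (N + 1) → ℕ) j < r)) ∘ Fin.succ) = V := by
      apply List.map_congr_left
      intro j _
      simp [Fin.cons_succ]
    rw [htail]
    simp [Fin.cons_zero, hk1r]
  -- w-lists
  have hw1 : wList T1 = G (fun i => rowWord σ i ++ eCol k i) r := by
    rw [wList_canon hT1 hT1σ]
    unfold G
    congr 1
    apply List.map_congr_left
    intro i _
    exact rowWord_snoc σ k i
  have hw2 : wList T2 = G (fun i => eCol (k - 1) i ++ rowWord σ i) r := by
    rw [wList_canon hT2 hT2σ]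
    unfold G
    congr 1
    apply List.map_congr_left
    intro i _
    exact rowWord_cons σ (k - 1) i
  have hw : wList T1 = wList T2 ++ [false] := by
    rw [hw1, hw2]
    have hk' : k - 1 + 1 = k := by omega
    have := main_id (rowWord σ) (k - 1) r (by omega)
    rw [hk'] at this
    exact this
  -- counts
  have hones2 : onesCt (wList T2) = onesCt V + 1 := by
    have hG : wList T2 = G (rowWord (Fin.cons (k - 1) σ : Fin (N + 1) → ℕ)) r := by
      rw [hw2]
      unfold G
      congr 1
      apply List.map_congr_left
      intro i _
      exact (rowWord_cons σ (k - 1) i).symm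
    unfold onesCt
    rw [hG, count_G, List.finRange_succ, List.map_cons, List.map_map]
    have : ((List.finRange N).map
        ((fun j => decide ((Fin.cons (k-1) σ : Fin (N+1) → ℕ) j < r)) ∘ Fin.succ)) = V := by
      apply List.map_congr_left
      intro j _
      simp [Fin.cons_succ]
    rw [this]
    simp [List.count_cons, Fin.cons_zero, hk1r]
  -- assemble
  rw [hv1, hv2, hw]
  have hrule := hp.2.2.2.2.1 V (wList T2 ++ [false])
  have hcnt : onesCt V + 1 = onesCt (wList T2 ++ [false]) := by
    unfold onesCt at hones2 ⊢
    rw [List.count_append]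
    have h0 : ([false] : List Bool).count true = 0 := rfl
    rw [h0, Nat.add_zero, hones2]
  exact hrule hcnt
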